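/- arXiv:2601.23245 — 3 statements merged into one kernel-verified Lean document; each statement's English description precedes it below -/
import Mathlib

section
/- Take m = 1 (so D = n−1, N = n, η = x_1^n, ∂f = ∂f/∂x_1). Then for every k with 1 ≤ k ≤ n, ∇(p_k) − (−1)^{n−1}·p_k ∈ I². -/
open MvPolynomial Finset

noncomputable section

abbrev Rn (n : ℕ) : Type := MvPolynomial (Fin n) ℚ
abbrev Kn (n : ℕ) : Type := FractionRing (Rn n)

/-- The canonical map from `R = ℚ[x_1,…,x_n]` to its fraction field. -/
def toK {n : ℕ} (f : Rn n) : Kn n := algebraMap (Rn n) (Kn n) f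

/-- `𝔯 = (−1)^D ∏_{i=1}^m ∏_{j=m+1}^n (x_i − x_j)` where `D = m(n−m)`. -/
def frakr (n m : ℕ) : Rn n :=
  ((-1 : ℚ) ^ (m * (n - m))) •
    (∏ i ∈ univ.filter (fun i : Fin n => (i : ℕ) < m),
      ∏ j ∈ univ.filter (fun j : Fin n => m ≤ (j : ℕ)), (X i - X j))

/-- `η = (x_1 + ⋯ + x_m)^N` where `N = m(n−m)+1`. -/
def etaA (n m : ℕ) : Rn n :=
  (∑ i ∈ univ.filter (fun i : Fin n => (i : ℕ) < m), X i) ^ (m * (n - m) + 1)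

/-- `∂f = Σ_{i=1}^m ∂f/∂x_i`. -/
def pdA (n m : ℕ) (f : Rn n) : Rn n :=
  ∑ i ∈ univ.filter (fun i : Fin n => (i : ℕ) < m), pderiv i f

/-- `∫f = (1/(m!(n−m)!)) Σ_{w ∈ S_n} w(f/𝔯)`, computed in the fraction field,
using `w(f/𝔯) = w(f)/w(𝔯)`. -/
def intA (n m : ℕ) (f : Rn n) : Kn n :=
  ((m.factorial * (n - m).factorial : ℕ) : Kn n)⁻¹ *
    ∑ w : Equiv.Perm (Fin n),
      toK (rename (⇑w) f) / toK (rename (⇑w) (frakr n m))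

/-- `∇(f) = ∫(η·∂f)`. -/
def nablaA (n m : ℕ) (f : Rn n) : Kn n := intA n m (etaA n m * pdA n m f)

/-- The ring `R^{S_n}` of symmetric polynomials. -/
def symAlg (n : ℕ) : Subalgebra ℚ (Rn n) := symmetricSubalgebra (Fin n) ℚ

/-- The ideal `I ⊂ R^{S_n}` of symmetric polynomials with zero constant term. -/
def augA (n : ℕ) : Ideal ↥(symAlg n) :=
  RingHom.ker ((constantCoeff : Rn n →+* ℚ).comp (symAlg n).val.toRingHom)


/-!
With `m = 1` we have `∂p_k = k x₁^(k-1)` and `𝔯 = (-1)^(n-1) ∏_{j>1} (x₁ - x_j)`, so the summand of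
`w ∈ S_n` in `∇(p_k)` depends only on `w(1)` and
`∇(p_k) = (-1)^(n-1) k Σᵢ xᵢ^(n-1+k) / ∏_{j≠i} (xᵢ - x_j)`.
By Lagrange interpolation these sums vanish below exponent `n-1` and equal `1` at `n-1`, and the
Vieta relation `xᵢ^n = Σ_m (-1)^m e_{m+1} xᵢ^(n-1-m)` shows that they satisfy the recurrence of the
complete homogeneous symmetric polynomials, so `∇(p_k) = (-1)^(n-1) k h_k`.
Modulo `I²` that recurrence gives `h_k ≡ (-1)^(k-1) e_k`, and Newton's identity gives
`p_k ≡ (-1)^(k-1) k e_k`; hence `k h_k ≡ p_k`.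
-/

theorem pow_card_eq_sum_esymm {ι R : Type*} [Fintype ι] [CommRing R] (v : ι → R) (i : ι) :
    v i ^ Fintype.card ι = ∑ m ∈ range (Fintype.card ι),
      (-1) ^ m * (univ.val.map v).esymm (m + 1) * v i ^ (Fintype.card ι - 1 - m) := by
  have hroot :=
    congrArg (Polynomial.eval (v i)) (Multiset.prod_X_sub_X_eq_sum_esymm (univ.val.map v))
  have hzero :
      ((univ.val.map v).map fun t => Polynomial.X - Polynomial.C t).prod.eval (v i) = 0 := by
    rw [Polynomial.eval_multiset_prod]
    refine Multiset.prod_eq_zero (Multiset.mem_map.mpr ⟨_, Multiset.mem_map.mpr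
      ⟨v i, Multiset.mem_map_of_mem _ (mem_univ i), rfl⟩, by simp⟩)
  have hesymm_zero : (univ.val.map v).esymm 0 = 1 := by simp [Multiset.esymm]
  rw [hzero, Multiset.card_map, card_val, card_univ, Polynomial.eval_finsetSum,
    sum_range_succ'] at hroot
  simp only [Polynomial.eval_mul, Polynomial.eval_pow, Polynomial.eval_neg, Polynomial.eval_one,
    Polynomial.eval_C, Polynomial.eval_X, hesymm_zero, pow_zero, one_mul, Nat.sub_zero] at hroot
  rw [eq_neg_of_add_eq_zero_right hroot.symm, ← sum_neg_distrib]
  refine sum_congr rfl fun m _ => ?_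
  rw [Nat.sub_sub, Nat.add_comm 1 m, pow_succ]
  ring

theorem Multiset.esymm_eq_zero_of_card_lt {R : Type*} [CommSemiring R] {s : Multiset R} {j : ℕ}
    (hj : Multiset.card s < j) : s.esymm j = 0 := by
  rw [Multiset.esymm, Multiset.powersetCard_eq_empty j hj, Multiset.map_zero, Multiset.sum_zero]

theorem Ideal.Quotient.mk_sq_mul_eq_zero {A : Type*} [CommRing A] {I : Ideal A} {x y : A}
    (hx : x ∈ I) (hy : y ∈ I) : Ideal.Quotient.mk (I ^ 2) (x * y) = 0 :=
  Ideal.Quotient.eq_zero_iff_mem.mpr (pow_two I ▸ Ideal.mul_mem_mul hx hy)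

section LagrangePowerSum

variable {ι F : Type*} [Fintype ι] [DecidableEq ι] [Field F]

def lagrangePowerSum (v : ι → F) (r : ℕ) : F :=
  ∑ i, v i ^ r / ∏ j ∈ univ.erase i, (v i - v j)

theorem lagrangePowerSum_of_lt {v : ι → F} (hv : Function.Injective v) {r : ℕ}
    (hr : r < Fintype.card ι) :
    lagrangePowerSum v r = if r = Fintype.card ι - 1 then 1 else 0 := by
  have hdeg : (Polynomial.X ^ r : Polynomial F).degree < #(univ : Finset ι) := by
    rw [Polynomial.degree_X_pow, card_univ]
    exact_mod_cast hr
  have hcoeff := Lagrange.coeff_eq_sum hv.injOn hdeg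
  simp only [Polynomial.coeff_X_pow, Polynomial.eval_pow, Polynomial.eval_X, card_univ] at hcoeff
  rw [lagrangePowerSum, ← hcoeff]
  exact if_congr eq_comm rfl rfl

theorem lagrangePowerSum_card_add (v : ι → F) (k : ℕ) :
    lagrangePowerSum v (Fintype.card ι + k) = ∑ m ∈ range (Fintype.card ι),
      (-1) ^ m * (univ.val.map v).esymm (m + 1) *
        lagrangePowerSum v (Fintype.card ι - 1 - m + k) := by
  simp only [lagrangePowerSum, mul_sum]
  rw [sum_comm]
  refine sum_congr rfl fun i _ => ?_
  rw [pow_add, pow_card_eq_sum_esymm v i, sum_mul, sum_div]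
  refine sum_congr rfl fun m _ => ?_
  ring

end LagrangePowerSum

section SymmetricSubalgebra

variable (σ R : Type*) [CommRing R]

def symmAugIdeal : Ideal (symmetricSubalgebra σ R) :=
  RingHom.ker
    ((constantCoeff : MvPolynomial σ R →+* R).comp (symmetricSubalgebra σ R).val.toRingHom)

theorem mem_symmAugIdeal {x : symmetricSubalgebra σ R} :
    x ∈ symmAugIdeal σ R ↔ constantCoeff (x : MvPolynomial σ R) = 0 :=
  Iff.rfl

variable [Fintype σ]

def esymmSym (j : ℕ) : symmetricSubalgebra σ R := ⟨esymm σ R j, esymm_isSymmetric σ R j⟩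

def psumSym (k : ℕ) : symmetricSubalgebra σ R := ⟨psum σ R k, psum_isSymmetric σ R k⟩

/-- The complete homogeneous symmetric polynomials `h_k`, given by their recurrence
`h_{k+1} = Σ_{m ≤ k} (-1)^m e_{m+1} h_{k-m}` rather than as `MvPolynomial.hsymm`. -/
def hsymmRec : ℕ → symmetricSubalgebra σ R
  | 0 => 1
  | k + 1 => ∑ m ∈ range (k + 1), (-1) ^ m * esymmSym σ R (m + 1) * hsymmRec (k - m)

theorem esymmSym_mem_symmAugIdeal {j : ℕ} (hj : j ≠ 0) : esymmSym σ R j ∈ symmAugIdeal σ R := by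
  change constantCoeff (esymm σ R j) = 0
  rw [esymm, map_sum]
  refine sum_eq_zero fun t ht => ?_
  obtain ⟨i, hi⟩ : t.Nonempty :=
    card_pos.mp ((mem_powersetCard.mp ht).2 ▸ Nat.pos_of_ne_zero hj)
  rw [map_prod]
  exact prod_eq_zero hi (constantCoeff_X R i)

theorem psumSym_mem_symmAugIdeal {k : ℕ} (hk : k ≠ 0) : psumSym σ R k ∈ symmAugIdeal σ R := by
  change constantCoeff (psum σ R k) = 0
  rw [psum, map_sum]
  exact sum_eq_zero fun i _ => by rw [map_pow, constantCoeff_X, zero_pow hk]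

theorem hsymmRec_mem_symmAugIdeal {k : ℕ} (hk : k ≠ 0) : hsymmRec σ R k ∈ symmAugIdeal σ R := by
  obtain ⟨k, rfl⟩ := Nat.exists_eq_succ_of_ne_zero hk
  rw [hsymmRec]
  exact Ideal.sum_mem _ fun m _ =>
    Ideal.mul_mem_right _ _ (Ideal.mul_mem_left _ _ (esymmSym_mem_symmAugIdeal σ R m.succ_ne_zero))

local notation "π" => Ideal.Quotient.mk (symmAugIdeal σ R ^ 2)

theorem mk_hsymmRec_succ (k : ℕ) :
    π (hsymmRec σ R (k + 1)) = π ((-1) ^ k * esymmSym σ R (k + 1)) := by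
  have hlow : ∀ m ∈ range k, π ((-1) ^ m * esymmSym σ R (m + 1) * hsymmRec σ R (k - m)) = 0 := by
    intro m hm
    rw [mul_assoc, map_mul,
      Ideal.Quotient.mk_sq_mul_eq_zero (esymmSym_mem_symmAugIdeal σ R m.succ_ne_zero)
        (hsymmRec_mem_symmAugIdeal σ R (Nat.sub_ne_zero_of_lt (mem_range.mp hm))), mul_zero]
  rw [hsymmRec, sum_range_succ, map_add, map_sum, sum_eq_zero hlow, zero_add, Nat.sub_self,
    hsymmRec, mul_one]

theorem mk_psumSym_succ (k : ℕ) :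
    π (psumSym σ R (k + 1)) = π ((-1) ^ k * (k + 1 : ℕ) * esymmSym σ R (k + 1)) := by
  have newton : psumSym σ R (k + 1) =
      (-1 : symmetricSubalgebra σ R) ^ k * (k + 1 : ℕ) * esymmSym σ R (k + 1) -
        ∑ a ∈ antidiagonal (k + 1) with a.1 ∈ Set.Ioo 0 (k + 1),
          ((-1) ^ a.1 * esymmSym σ R a.1 * psumSym σ R a.2) := by
    apply Subtype.ext
    push_cast [psumSym, esymmSym]
    rw [psum_eq_mul_esymm_sub_sum σ R (k + 1) k.succ_pos]
    push_cast
    ring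
  have hmixed : ∀ a ∈ {a ∈ antidiagonal (k + 1) | a.1 ∈ Set.Ioo 0 (k + 1)},
      π ((-1) ^ a.1 * esymmSym σ R a.1 * psumSym σ R a.2) = 0 := by
    intro a ha
    rw [mem_filter, HasAntidiagonal.mem_antidiagonal, Set.mem_Ioo] at ha
    obtain ⟨hsum, hpos, hlt⟩ := ha
    rw [mul_assoc, map_mul,
      Ideal.Quotient.mk_sq_mul_eq_zero (esymmSym_mem_symmAugIdeal σ R hpos.ne')
        (psumSym_mem_symmAugIdeal σ R (by omega)), mul_zero]
  rw [newton, map_sub, map_sum, sum_eq_zero hmixed, sub_zero]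

end SymmetricSubalgebra

theorem lagrangePowerSum_eq_aeval_hsymmRec {ι F R : Type*} [Fintype ι] [DecidableEq ι]
    [Nonempty ι] [Field F] [CommRing R] [Algebra R F] {v : ι → F} (hv : Function.Injective v)
    (k : ℕ) :
    lagrangePowerSum v (Fintype.card ι - 1 + k) = aeval v (hsymmRec ι R k : MvPolynomial ι R) := by
  have hn : 0 < Fintype.card ι := Fintype.card_pos
  induction k using Nat.strong_induction_on with
  | _ k ih =>
  cases k with
  | zero =>
    rw [lagrangePowerSum_of_lt hv (by omega), if_pos (by omega), hsymmRec]
    simp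
  | succ k =>
    set n := Fintype.card ι
    rw [show n - 1 + (k + 1) = n + k by omega, lagrangePowerSum_card_add, hsymmRec]
    push_cast [esymmSym]
    simp only [map_sum, map_mul, map_pow, map_neg, map_one, aeval_esymm_eq_multiset_esymm]
    -- both recurrences reduce to their terms with `m < min n (k + 1)`
    rw [← sum_subset (range_subset_range.mpr (min_le_left n (k + 1))),
      ← sum_subset (range_subset_range.mpr (min_le_right n (k + 1)))]
    · refine sum_congr rfl fun m hm => ?_
      rw [mem_range, lt_min_iff] at hm
      rw [show n - 1 - m + k = n - 1 + (k - m) by omega, ih (k - m) (by omega)]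
    · intro m hm hm'
      rw [mem_range] at hm
      rw [mem_range, lt_min_iff, not_and_or] at hm'
      have hcard : Multiset.card (univ.val.map v) < m + 1 := by
        rw [Multiset.card_map, card_val, card_univ]
        omega
      rw [Multiset.esymm_eq_zero_of_card_lt hcard, mul_zero, zero_mul]
    · intro m hm hm'
      rw [mem_range] at hm
      rw [mem_range, lt_min_iff, not_and_or] at hm'
      rw [lagrangePowerSum_of_lt hv (by omega), if_neg (by omega), mul_zero]

theorem Fin.sum_perm_apply_zero {M : Type*} [AddCommMonoid M] (n : ℕ) (F : Fin (n + 1) → M) :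
    ∑ w : Equiv.Perm (Fin (n + 1)), F (w 0) = n.factorial • ∑ i, F i := by
  rw [← Equiv.sum_comp Equiv.Perm.decomposeFin.symm, Fintype.sum_prod_type, Finset.smul_sum]
  refine sum_congr rfl fun i _ => ?_
  simp [Fintype.card_perm]

theorem toK_eq_aeval {n : ℕ} (f : Rn n) : toK f = aeval (fun i => toK (X i)) f := by
  conv_lhs => rw [← aeval_X_left_apply f]
  rw [toK, ← IsScalarTower.toAlgHom_apply ℚ, ← AlgHom.comp_apply, comp_aeval]
  rfl

theorem Fin.filter_val_lt_one (n : ℕ) :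
    univ.filter (fun i : Fin (n + 1) => (i : ℕ) < 1) = {0} := by
  ext i
  simp only [mem_filter, mem_univ, true_and, mem_singleton, Fin.ext_iff, Fin.val_zero]
  omega

theorem Fin.filter_one_le_val (n : ℕ) :
    univ.filter (fun j : Fin (n + 1) => 1 ≤ (j : ℕ)) = univ.erase 0 := by
  ext j
  simp only [mem_filter, mem_univ, true_and, mem_erase, and_true, ne_eq, Fin.ext_iff, Fin.val_zero]
  omega

theorem etaA_one_mul_pdA_one_psum (n : ℕ) {k : ℕ} (hk : k ≠ 0) :
    etaA (n + 1) 1 * pdA (n + 1) 1 (psum (Fin (n + 1)) ℚ k) = (k : ℚ) • X 0 ^ (n + k) := by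
  have hpd : pderiv 0 (psum (Fin (n + 1)) ℚ k) = (k : ℚ) • X 0 ^ (k - 1) := by
    rw [psum, map_sum, sum_eq_single 0 (fun i _ hi => by rw [pderiv_pow, pderiv_X_of_ne hi,
      mul_zero]) (by simp), pderiv_pow, pderiv_X_self, mul_one, smul_eq_C_mul, map_natCast]
  rw [etaA, pdA, Fin.filter_val_lt_one, sum_singleton, sum_singleton, hpd, mul_smul_comm,
    ← pow_add]
  congr 2
  omega

theorem frakr_one (n : ℕ) : frakr (n + 1) 1 = (-1 : ℚ) ^ n • ∏ j ∈ univ.erase 0, (X 0 - X j) := by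
  rw [frakr, Fin.filter_val_lt_one, Fin.filter_one_le_val, prod_singleton, Nat.add_sub_cancel,
    one_mul]

theorem nablaA_one_psum (n : ℕ) {k : ℕ} (hk : k ≠ 0) :
    nablaA (n + 1) 1 (psum (Fin (n + 1)) ℚ k) =
      toK (((-1) ^ n * k : ℚ) • (hsymmRec (Fin (n + 1)) ℚ k : Rn (n + 1))) := by
  set v : Fin (n + 1) → Kn (n + 1) := fun i => toK (X i)
  have hv : Function.Injective v := (IsFractionRing.injective (Rn _) (Kn _)).comp X_injective
  have hsummand : ∀ w : Equiv.Perm (Fin (n + 1)),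
      toK (rename w ((k : ℚ) • X 0 ^ (n + k))) /
          toK (rename w ((-1 : ℚ) ^ n • ∏ j ∈ univ.erase 0, (X 0 - X j))) =
        algebraMap ℚ _ ((-1) ^ n * k) *
          (v (w 0) ^ (n + k) / ∏ j ∈ univ.erase (w 0), (v (w 0) - v j)) := by
    intro w
    have hreindex : ∏ j ∈ univ.erase 0, (v (w 0) - v (w j)) =
        ∏ j ∈ univ.erase (w 0), (v (w 0) - v j) :=
      prod_equiv w (by simp) fun _ _ => rfl
    have hsign : ((-1 : Kn (n + 1)) ^ n) ^ 2 = 1 := by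
      rw [← pow_mul, mul_comm, pow_mul, neg_one_sq, one_pow]
    rw [toK_eq_aeval, toK_eq_aeval, aeval_rename, aeval_rename]
    simp only [smul_eq_C_mul, map_mul, map_pow, map_prod, map_sub, aeval_C, aeval_X,
      Function.comp_apply, map_neg, map_one]
    rw [show ∏ j ∈ univ.erase 0, (toK (X (w 0)) - toK (X (w j))) = _ from hreindex]
    field_simp
    rw [hsign, mul_one]
  have hfact : (n.factorial : Kn (n + 1)) ≠ 0 := Nat.cast_ne_zero.mpr n.factorial_ne_zero
  have hcard : Fintype.card (Fin (n + 1)) - 1 + k = n + k := by simp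
  rw [nablaA, intA, etaA_one_mul_pdA_one_psum n hk, frakr_one,
    sum_congr rfl fun w _ => hsummand w, ← mul_sum,
    Fin.sum_perm_apply_zero n fun i => v i ^ (n + k) / ∏ j ∈ univ.erase i, (v i - v j)]
  change _ * (_ * (_ • lagrangePowerSum v (n + k))) = _
  rw [← hcard, lagrangePowerSum_eq_aeval_hsymmRec (R := ℚ) hv, toK_eq_aeval, smul_eq_C_mul,
    Nat.factorial_one, one_mul, Nat.add_sub_cancel, nsmul_eq_mul]
  simp only [map_mul, aeval_C]
  field_simp
  rfl

theorem stmt_1_general (n : ℕ) (k : ℕ) (hk1 : 1 ≤ k) (hk2 : k ≤ n) :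
    ∃ g pk : ↥(symAlg n),
      toK (g : Rn n) = nablaA n 1 (∑ i : Fin n, X i ^ k) ∧
      (pk : Rn n) = ∑ i : Fin n, X i ^ k ∧
      g - ((-1 : ℚ) ^ (n - 1)) • pk ∈ (augA n) ^ 2 := by
  obtain ⟨n, rfl⟩ : ∃ m, n = m + 1 := ⟨n - 1, by omega⟩
  obtain ⟨k, rfl⟩ : ∃ j, k = j + 1 := ⟨k - 1, by omega⟩
  refine ⟨((-1) ^ n * (k + 1 : ℕ) : ℚ) • hsymmRec (Fin (n + 1)) ℚ (k + 1),
    psumSym (Fin (n + 1)) ℚ (k + 1), (nablaA_one_psum n k.succ_ne_zero).symm, rfl, ?_⟩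
  have hcongr : Ideal.Quotient.mk (symmAugIdeal (Fin (n + 1)) ℚ ^ 2)
      (((-1) ^ n * (k + 1 : ℕ) : ℚ) • hsymmRec (Fin (n + 1)) ℚ (k + 1)) =
      Ideal.Quotient.mk _ ((-1 : ℚ) ^ n • psumSym (Fin (n + 1)) ℚ (k + 1)) := by
    simp only [Algebra.smul_def, map_mul, map_pow, map_neg, map_one, map_natCast,
      mk_hsymmRec_succ, mk_psumSym_succ]
    ring
  exact Ideal.Quotient.eq.mp hcongr

/-- for `m = 1`, `∇(p_k) − (−1)^{n−1}·p_k ∈ I²` for `1 ≤ k ≤ n`. -/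
theorem stmt_1 (n : ℕ) (hn : 2 ≤ n) (k : ℕ) (hk1 : 1 ≤ k) (hk2 : k ≤ n) :
    ∃ g pk : ↥(symAlg n),
      toK (g : Rn n) = nablaA n 1 (∑ i : Fin n, X i ^ k) ∧
      (pk : Rn n) = ∑ i : Fin n, X i ^ k ∧
      g - ((-1 : ℚ) ^ (n - 1)) • pk ∈ (augA n) ^ 2 :=
  stmt_1_general n k hk1 hk2

end
end

section
/- Let 1 ≤ m < n and let λ be a partition with at most m parts. Set γ := (λ_1+m−1, λ_2+m−2, …, λ_m, n−m−1, n−m−2, …, 1, 0) ∈ ℕ^n (the concatenation of λ+δ_m with δ_{n−m}). Then in ℚ[x_1,…,x_n]: (1/(m!·(n−m)!)) · Σ_{ρ∈S_n} sgn(ρ)·ρ( a_{λ+δ_m}(x_1,…,x_m) · a_{δ_{n−m}}(x_{m+1},…,x_n) ) = a_γ(x_1,…,x_n), where S_n acts by permuting the variables. -/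
open MvPolynomial Finset

noncomputable section

/-- The alternant `a_α(y) = Σ_{ρ∈S_r} sgn(ρ) ∏_i y_{ρ(i)}^{α_i}`. -/
def alt {n : ℕ} (r : ℕ) (α : Fin r → ℕ) (y : Fin r → Rn n) : Rn n :=
  ∑ ρ : Equiv.Perm (Fin r), ((Equiv.Perm.sign ρ : ℤ)) • ∏ i, y (ρ i) ^ (α i)

/-!
Expanding both alternants, the product `a_{λ+δ_m}(x') · a_{δ_{n-m}}(x'')` is the signed sum of the
monomials `∏_k x_{u(k)}^{γ_k}` over the `m!(n-m)!` permutations `u ∈ S_m × S_{n-m} ⊆ S_n`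
preserving the two blocks of variables. Antisymmetrizing a single signed monomial of this kind
over `S_n` gives `a_γ(x)`, since `ρ ↦ ρ u` is a bijection of `S_n`; hence the antisymmetrization
of the product is `m!(n-m)! · a_γ(x)`.
-/

section Alternant

variable {ι κ σ A R : Type*} [Fintype ι] [DecidableEq ι] [Fintype κ] [DecidableEq κ]
  [Fintype σ] [DecidableEq σ] [CommRing A] [CommRing R]

def alternantTerm (α : σ → ℕ) (x : σ → A) (u : Equiv.Perm σ) : A :=
  (Equiv.Perm.sign u : ℤ) • ∏ k, x (u k) ^ α k

def alternant (α : σ → ℕ) (x : σ → A) : A :=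
  ∑ u : Equiv.Perm σ, alternantTerm α x u

theorem alt_eq_alternant {n r : ℕ} (α : Fin r → ℕ) (y : Fin r → Rn n) :
    alt r α y = alternant α y :=
  rfl

theorem alternantTerm_mul_alternantTerm (e : ι ⊕ κ ≃ σ) (γ : σ → ℕ) (x : σ → A)
    (p : Equiv.Perm ι) (q : Equiv.Perm κ) :
    alternantTerm (γ ∘ e ∘ Sum.inl) (x ∘ e ∘ Sum.inl) p *
        alternantTerm (γ ∘ e ∘ Sum.inr) (x ∘ e ∘ Sum.inr) q =
      alternantTerm γ x (e.permCongr (p.sumCongr q)) := by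
  have hsign : (Equiv.Perm.sign (e.permCongr (p.sumCongr q)) : ℤ) =
      (Equiv.Perm.sign p : ℤ) * Equiv.Perm.sign q := by
    rw [Equiv.Perm.sign_permCongr, Equiv.Perm.sign_sumCongr, Units.val_mul]
  have hprod : ∏ k, x (e.permCongr (p.sumCongr q) k) ^ γ k =
      (∏ i, x (e (Sum.inl (p i))) ^ γ (e (Sum.inl i))) *
        ∏ j, x (e (Sum.inr (q j))) ^ γ (e (Sum.inr j)) := by
    rw [← e.prod_comp, Fintype.prod_sum_type]
    simp only [Equiv.permCongr_apply, Equiv.symm_apply_apply, Equiv.Perm.sumCongr_apply,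
      Sum.map_inl, Sum.map_inr]
  rw [alternantTerm, alternantTerm, alternantTerm, hsign, hprod, smul_mul_smul_comm]
  rfl

theorem alternant_mul_alternant (e : ι ⊕ κ ≃ σ) (γ : σ → ℕ) (x : σ → A) :
    alternant (γ ∘ e ∘ Sum.inl) (x ∘ e ∘ Sum.inl) *
        alternant (γ ∘ e ∘ Sum.inr) (x ∘ e ∘ Sum.inr) =
      ∑ p : Equiv.Perm ι, ∑ q : Equiv.Perm κ, alternantTerm γ x (e.permCongr (p.sumCongr q)) := by
  simp only [alternant, sum_mul_sum, alternantTerm_mul_alternantTerm]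

theorem sign_smul_rename_alternantTerm (γ : σ → ℕ) (ρ u : Equiv.Perm σ) :
    (Equiv.Perm.sign ρ : ℤ) • rename ρ (alternantTerm γ (X : σ → MvPolynomial σ R) u) =
      alternantTerm γ X (ρ * u) := by
  simp only [alternantTerm, map_zsmul, map_prod, map_pow, rename_X, smul_smul,
    Equiv.Perm.sign_mul, Units.val_mul, Equiv.Perm.mul_apply]

theorem sum_sign_smul_rename_alternantTerm (γ : σ → ℕ) (u : Equiv.Perm σ) :
    ∑ ρ : Equiv.Perm σ, (Equiv.Perm.sign ρ : ℤ) •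
        rename ρ (alternantTerm γ (X : σ → MvPolynomial σ R) u) = alternant γ X := by
  simp only [sign_smul_rename_alternantTerm]
  exact Equiv.sum_comp (Equiv.mulRight u) (alternantTerm γ X)

theorem sum_sign_smul_rename_alternant_mul_alternant (e : ι ⊕ κ ≃ σ) (γ : σ → ℕ) :
    ∑ ρ : Equiv.Perm σ, (Equiv.Perm.sign ρ : ℤ) •
        rename ρ (alternant (γ ∘ e ∘ Sum.inl) ((X : σ → MvPolynomial σ R) ∘ e ∘ Sum.inl) *
          alternant (γ ∘ e ∘ Sum.inr) ((X : σ → MvPolynomial σ R) ∘ e ∘ Sum.inr)) =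
      (Fintype.card (Equiv.Perm ι) * Fintype.card (Equiv.Perm κ)) • alternant γ X := by
  calc _ = ∑ p : Equiv.Perm ι, ∑ q : Equiv.Perm κ, ∑ ρ : Equiv.Perm σ, (Equiv.Perm.sign ρ : ℤ) •
          rename ρ (alternantTerm γ (X : σ → MvPolynomial σ R) (e.permCongr (p.sumCongr q))) := by
        simp only [alternant_mul_alternant, map_sum, smul_sum]
        rw [sum_comm]
        exact sum_congr rfl fun p _ => sum_comm
    _ = _ := by simp only [sum_sign_smul_rename_alternantTerm, sum_const, card_univ, mul_nsmul']

end Alternant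

/-- for a partition `λ` with at most `m` parts and
`γ = (λ+δ_m) ⌢ δ_{n−m}`, we have
`(1/(m!(n−m)!)) Σ_{ρ∈S_n} sgn(ρ) ρ(a_{λ+δ_m}(x_1,…,x_m)·a_{δ_{n−m}}(x_{m+1},…,x_n))
  = a_γ(x_1,…,x_n)`. -/
theorem stmt_4 (n m : ℕ) (hm2 : m < n)
    (lam : Fin m → ℕ) :
    ((m.factorial * (n - m).factorial : ℚ))⁻¹ •
      (∑ ρ : Equiv.Perm (Fin n), ((Equiv.Perm.sign ρ : ℤ)) •
        rename (⇑ρ)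
          (alt m (fun i => lam i + (m - 1 - (i : ℕ)))
              (fun i => X (Fin.castLE hm2.le i)) *
           alt (n - m) (fun j => n - m - 1 - (j : ℕ))
              (fun j => X (⟨m + (j : ℕ), by have := j.isLt; omega⟩ : Fin n)))) =
      alt n
        (fun i : Fin n =>
          if h : (i : ℕ) < m then lam ⟨i, h⟩ + (m - 1 - (i : ℕ)) else n - 1 - (i : ℕ))
        (fun i => X i) := by
  set γ : Fin n → ℕ := fun i =>
    if h : (i : ℕ) < m then lam ⟨i, h⟩ + (m - 1 - (i : ℕ)) else n - 1 - (i : ℕ)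
  let e : Fin m ⊕ Fin (n - m) ≃ Fin n := finSumFinEquiv.trans (finCongr (by omega))
  have hleft : alt m (fun i => lam i + (m - 1 - (i : ℕ))) (fun i => X (Fin.castLE hm2.le i)) =
      alternant (γ ∘ e ∘ Sum.inl) ((X : Fin n → Rn n) ∘ e ∘ Sum.inl) := by
    rw [alt_eq_alternant]
    congr 1
    funext i
    simp [γ, e]
  have hright : alt (n - m) (fun j => n - m - 1 - (j : ℕ))
      (fun j => X (⟨m + (j : ℕ), by have := j.isLt; omega⟩ : Fin n)) =
      alternant (γ ∘ e ∘ Sum.inr) ((X : Fin n → Rn n) ∘ e ∘ Sum.inr) := by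
    rw [alt_eq_alternant]
    congr 1
    funext j
    simp [γ, e]
    omega
  rw [hleft, hright, sum_sign_smul_rename_alternant_mul_alternant, alt_eq_alternant,
    Fintype.card_perm, Fintype.card_perm, Fintype.card_fin, Fintype.card_fin,
    ← Nat.cast_smul_eq_nsmul ℚ, smul_smul, Nat.cast_mul, inv_mul_cancel₀ (by positivity), one_smul]
end
end

section
/- For every n ≥ 2, with ρ_n := (n, n−1, …, 2, 1) and (1^{n−1}) the single-column partition with n−1 boxes: f^{ρ_n/(1^{n−1})} = (C(n,2)+1) · f^{(n−1, n−2, …, 1)}, where C(n,2) = n(n−1)/2. -/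
open Finset

noncomputable section

/-- The set of cells of the skew Young diagram `λ/ν` (rows indexed by `Fin n`,
columns 0-indexed): cell `(i, j)` belongs to `λ/ν` iff `ν_i ≤ j < λ_i`. -/
def skewCells (n : ℕ) (lam nu : Fin n → ℕ) : Finset (Fin n × ℕ) :=
  (univ ×ˢ range (univ.sup lam)).filter (fun c => nu c.1 ≤ c.2 ∧ c.2 < lam c.1)

open scoped Classical in
/-- `fSkew n lam nu` is the number of standard Young tableaux of skew shape
`λ/ν`: bijective fillings of the cells of `λ/ν` by `{1, …, |λ|−|ν|}` (here
realized as `Fin M` with `M = Σ_i (λ_i − ν_i)`), strictly increasing along each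
row and strictly increasing down each column. Taking `ν = 0` gives the number
`f^λ` of standard Young tableaux of shape `λ`. -/
def fSkew (n : ℕ) (lam nu : Fin n → ℕ) : ℕ :=
  Fintype.card
    {T : ↥(skewCells n lam nu) → Fin (∑ i, (lam i - nu i)) //
      Function.Bijective T ∧
      (∀ c c' : ↥(skewCells n lam nu),
        (c : Fin n × ℕ).1 = (c' : Fin n × ℕ).1 →
        (c : Fin n × ℕ).2 < (c' : Fin n × ℕ).2 → T c < T c') ∧
      (∀ c c' : ↥(skewCells n lam nu),
        (c : Fin n × ℕ).2 = (c' : Fin n × ℕ).2 →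
        (c : Fin n × ℕ).1 < (c' : Fin n × ℕ).1 → T c < T c')}

/-! In `ρₙ/(1ⁿ⁻¹)` the cell `(n-1, 0)` shares neither a row nor a column with any other cell,
and the remaining cells form a copy of `ρₙ₋₁` shifted one column to the right. A standard
filling is therefore the free choice of the entry of the isolated cell, among `C(n,2) + 1`
values, together with a standard filling of `ρₙ₋₁` by the other values, relabelled
monotonically. -/

lemma mem_skewCells {n : ℕ} {lam nu : Fin n → ℕ} {c : Fin n × ℕ} :
    c ∈ skewCells n lam nu ↔ nu c.1 ≤ c.2 ∧ c.2 < lam c.1 := by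
  simp only [skewCells, mem_filter, mem_product, mem_univ, true_and, mem_range,
    and_iff_right_iff_imp]
  exact fun h => h.2.trans_le (le_sup (mem_univ c.1))

def cellLT {r : ℕ} (c c' : Fin r × ℕ) : Prop :=
  (c.1 = c'.1 ∧ c.2 < c'.2) ∨ (c.2 = c'.2 ∧ c.1 < c'.1)

def IsStandardFilling {α : Type*} (R : α → α → Prop) {N : ℕ} (T : α → Fin N) : Prop :=
  Function.Bijective T ∧ ∀ a b, R a b → T a < T b

lemma fSkew_eq_natCard {n : ℕ} {lam nu : Fin n → ℕ} {N : ℕ} (hN : ∑ i, (lam i - nu i) = N) :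
    fSkew n lam nu = Nat.card {T : ↥(skewCells n lam nu) → Fin N //
      IsStandardFilling (fun c c' => cellLT c.1 c'.1) T} := by
  subst hN
  rw [fSkew, Fintype.card_eq_nat_card]
  refine Nat.card_congr (Equiv.subtypeEquivRight fun T => ?_)
  simp only [IsStandardFilling, cellLT]
  refine and_congr_right fun _ => ⟨fun h c c' hcc' => ?_, fun h => ⟨?_, ?_⟩⟩
  · rcases hcc' with ⟨h₁, h₂⟩ | ⟨h₁, h₂⟩
    exacts [h.1 c c' h₁ h₂, h.2 c c' h₁ h₂]
  · exact fun c c' h₁ h₂ => h c c' (.inl ⟨h₁, h₂⟩)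
  · exact fun c c' h₁ h₂ => h c c' (.inr ⟨h₁, h₂⟩)

def standardFillingEquivOfRelIso {α β : Type*} {R : α → α → Prop} {S : β → β → Prop}
    (e : R ≃r S) (N : ℕ) :
    {T : β → Fin N // IsStandardFilling S T} ≃ {T : α → Fin N // IsStandardFilling R T} :=
  (e.toEquiv.symm.arrowCongr (Equiv.refl _)).subtypeEquiv fun T => by
    refine and_congr (Function.Bijective.of_comp_iff T e.bijective).symm
      ⟨fun h a b hab => h _ _ (e.map_rel_iff.2 hab), fun h a b hab => ?_⟩
    simpa using h (e.symm a) (e.symm b) (e.symm.map_rel_iff.2 hab)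

section IsolatedCell

variable {α : Type*} {R : α → α → Prop} {N : ℕ} {s : α}

def removeCell (s : α) (T : α → Fin (N + 1)) (hT : T.Injective) : {a // a ≠ s} → Fin N :=
  fun a => (finSuccAboveEquiv (T s)).symm ⟨T a, hT.ne a.2⟩

lemma succAbove_removeCell (T : α → Fin (N + 1)) (hT : T.Injective) (a : {a // a ≠ s}) :
    (T s).succAbove (removeCell s T hT a) = T a :=
  congrArg Subtype.val ((finSuccAboveEquiv (T s)).apply_symm_apply ⟨T a, hT.ne a.2⟩)

def insertCell [DecidableEq α] (s : α) (k : Fin (N + 1)) (T : {a // a ≠ s} → Fin N) :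
    α → Fin (N + 1) :=
  fun a => if h : a = s then k else k.succAbove (T ⟨a, h⟩)

lemma IsStandardFilling.removeCell {T : α → Fin (N + 1)} (hT : IsStandardFilling R T) :
    IsStandardFilling (fun a b : {a // a ≠ s} => R a b) (removeCell s T hT.1.1) := by
  refine ⟨⟨fun a b hab => Subtype.ext (hT.1.1 ?_), fun v => ?_⟩, fun a b hab => ?_⟩
  · rw [← succAbove_removeCell T hT.1.1, hab, succAbove_removeCell]
  · obtain ⟨a, ha⟩ := hT.1.2 ((T s).succAbove v)
    have has : a ≠ s := by rintro rfl; exact (T a).succAbove_ne v ha.symm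
    refine ⟨⟨a, has⟩, Fin.succAbove_right_injective (p := T s) ?_⟩
    rw [succAbove_removeCell, ha]
  · rw [← Fin.succAbove_lt_succAbove_iff (p := T s), succAbove_removeCell, succAbove_removeCell]
    exact hT.2 _ _ hab

variable [DecidableEq α]

lemma insertCell_self (k : Fin (N + 1)) (T : {a // a ≠ s} → Fin N) : insertCell s k T s = k :=
  dif_pos rfl

lemma insertCell_of_ne (k : Fin (N + 1)) (T : {a // a ≠ s} → Fin N) {a : α} (ha : a ≠ s) :
    insertCell s k T a = k.succAbove (T ⟨a, ha⟩) :=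
  dif_neg ha

lemma IsStandardFilling.insertCell (hs : ∀ a, ¬R s a ∧ ¬R a s) (k : Fin (N + 1))
    {T : {a // a ≠ s} → Fin N} (hT : IsStandardFilling (fun a b : {a // a ≠ s} => R a b) T) :
    IsStandardFilling R (insertCell s k T) := by
  refine ⟨⟨fun a b hab => ?_, fun v => ?_⟩, fun a b hab => ?_⟩
  · by_cases ha : a = s <;> by_cases hb : b = s
    · rw [ha, hb]
    · rw [ha, insertCell_self, insertCell_of_ne _ _ hb] at hab
      exact absurd hab.symm (k.succAbove_ne _)
    · rw [hb, insertCell_self, insertCell_of_ne _ _ ha] at hab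
      exact absurd hab (k.succAbove_ne _)
    · rw [insertCell_of_ne _ _ ha, insertCell_of_ne _ _ hb] at hab
      exact congrArg Subtype.val (hT.1.1 (Fin.succAbove_right_injective hab))
  · by_cases hv : v = k
    · exact ⟨s, by rw [insertCell_self, hv]⟩
    · obtain ⟨w, rfl⟩ := Fin.exists_succAbove_eq hv
      obtain ⟨a, rfl⟩ := hT.1.2 w
      exact ⟨a, insertCell_of_ne _ _ a.2⟩
  · have ha : a ≠ s := by rintro rfl; exact (hs b).1 hab
    have hb : b ≠ s := by rintro rfl; exact (hs a).2 hab
    rw [insertCell_of_ne _ _ ha, insertCell_of_ne _ _ hb, Fin.succAbove_lt_succAbove_iff]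
    exact hT.2 ⟨a, ha⟩ ⟨b, hb⟩ hab

def standardFillingEquivOfIsolated (hs : ∀ a, ¬R s a ∧ ¬R a s) :
    {T : α → Fin (N + 1) // IsStandardFilling R T} ≃
      Fin (N + 1) ×
        {T : {a // a ≠ s} → Fin N // IsStandardFilling (fun a b : {a // a ≠ s} => R a b) T} where
  toFun T := (T.1 s, ⟨removeCell s T.1 T.2.1.1, T.2.removeCell⟩)
  invFun kT := ⟨insertCell s kT.1 kT.2.1, kT.2.2.insertCell hs kT.1⟩
  left_inv := by
    rintro ⟨T, hT⟩
    refine Subtype.ext (funext fun a => ?_)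
    by_cases ha : a = s
    · subst ha; exact insertCell_self _ _
    · exact (insertCell_of_ne _ _ ha).trans (succAbove_removeCell T hT.1.1 ⟨a, ha⟩)
  right_inv := by
    rintro ⟨k, T, hT⟩
    have hk : insertCell s k T s = k := insertCell_self k T
    refine Prod.ext hk (Subtype.ext (funext fun a => ?_))
    apply Fin.succAbove_right_injective (p := insertCell s k T s)
    rw [succAbove_removeCell, insertCell_of_ne _ _ a.2, hk]

end IsolatedCell

section Staircase

variable (m : ℕ)

abbrev staircaseMinusColumn : Finset (Fin (m + 1) × ℕ) :=
  skewCells (m + 1) (fun i => m + 1 - i) (fun i => if (i : ℕ) < m then 1 else 0)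

abbrev staircase : Finset (Fin m × ℕ) :=
  skewCells m (fun i => m - i) (fun _ => 0)

def cornerCell : staircaseMinusColumn m :=
  ⟨(Fin.last m, 0), mem_skewCells.2 (by simp)⟩

variable {m}

lemma lt_of_ne_cornerCell {c : staircaseMinusColumn m} (hc : c ≠ cornerCell m) :
    (c.1.1 : ℕ) < m ∧ 0 < c.1.2 := by
  obtain ⟨⟨i, j⟩, hij⟩ := c
  have hi : (i : ℕ) < m := by
    by_contra! hi
    obtain rfl : i = Fin.last m := Fin.ext (by rw [Fin.val_last]; omega)
    have hj : j = 0 := by simpa [mem_skewCells] using hij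
    subst hj
    exact hc rfl
  have := (mem_skewCells.1 hij).1
  simp only [hi, if_true] at this
  exact ⟨hi, this⟩

lemma cornerCell_isolated (c : staircaseMinusColumn m) :
    ¬cellLT (cornerCell m).1 c.1 ∧ ¬cellLT c.1 (cornerCell m).1 := by
  by_cases hc : c = cornerCell m
  · subst hc; simp [cellLT]
  obtain ⟨hi, hj⟩ := lt_of_ne_cornerCell hc
  simp only [cellLT, cornerCell, Fin.ext_iff, Fin.val_last, Fin.lt_def]
  omega

def shiftCell (c : Fin m × ℕ) : Fin (m + 1) × ℕ := (c.1.castSucc, c.2 + 1)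

lemma shiftCell_injective : Function.Injective (@shiftCell m) := fun c c' h => by
  simp only [shiftCell, Prod.mk.injEq, Fin.castSucc_inj, Nat.add_right_cancel_iff] at h
  exact Prod.ext h.1 h.2

lemma cellLT_shiftCell_iff {c c' : Fin m × ℕ} :
    cellLT (shiftCell c) (shiftCell c') ↔ cellLT c c' := by
  simp [cellLT, shiftCell]

lemma shiftCell_mem {c : Fin m × ℕ} (hc : c ∈ staircase m) :
    shiftCell c ∈ staircaseMinusColumn m := by
  have := (mem_skewCells.1 hc).2
  simp only [mem_skewCells, shiftCell, Fin.val_castSucc, c.1.2, if_true]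
  omega

lemma shiftCell_ne_cornerCell (c : Fin m × ℕ) : shiftCell c ≠ (cornerCell m).1 := by
  simp [shiftCell, cornerCell]

def staircaseShiftRelIso :
    (fun c c' : staircase m => cellLT c.1 c'.1) ≃r
      (fun a b : {a : staircaseMinusColumn m // a ≠ cornerCell m} => cellLT a.1.1 b.1.1) where
  toEquiv := Equiv.ofBijective
    (fun c => ⟨⟨shiftCell c.1, shiftCell_mem c.2⟩,
      fun h => shiftCell_ne_cornerCell c.1 (congrArg Subtype.val h)⟩)
    ⟨fun c c' h => Subtype.ext (shiftCell_injective (congrArg (fun a => a.1.1) h)),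
     fun a => by
      obtain ⟨hi, hj⟩ := lt_of_ne_cornerCell a.2
      refine ⟨⟨(Fin.castLT a.1.1.1 hi, a.1.1.2 - 1), mem_skewCells.2 ?_⟩, ?_⟩
      · have := (mem_skewCells.1 a.1.2).2
        simp only [Fin.val_castLT]
        omega
      · ext
        · simp [shiftCell]
        · simp [shiftCell]; omega⟩
  map_rel_iff' := cellLT_shiftCell_iff

end Staircase

lemma sum_staircase_rows (m : ℕ) : ∑ i : Fin m, (m - (i : ℕ)) = (m + 1).choose 2 := by
  induction m with
  | zero => rfl
  | succ m ih =>
    rw [Fin.sum_univ_succ, Nat.choose_succ_succ', ← ih, Nat.choose_one_right]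
    simp only [Fin.val_zero, Fin.val_succ, Nat.sub_zero, Nat.add_sub_add_right]

lemma sum_staircaseMinusColumn_rows (m : ℕ) :
    ∑ i : Fin (m + 1), (m + 1 - (i : ℕ) - if (i : ℕ) < m then 1 else 0) = (m + 1).choose 2 + 1 := by
  rw [Fin.sum_univ_castSucc, ← sum_staircase_rows]
  simp only [Fin.val_castSucc, Fin.is_lt, if_true, Fin.val_last, lt_irrefl, if_false]
  congr 1
  · exact sum_congr rfl fun i _ => by omega
  · omega

theorem stmt_15_general (n : ℕ) :
    fSkew n (fun i => n - (i : ℕ)) (fun i => if (i : ℕ) < n - 1 then 1 else 0) =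
      (n.choose 2 + 1) * fSkew (n - 1) (fun i => n - 1 - (i : ℕ)) (fun _ => 0) := by
  rcases n with _ | m
  · rw [Nat.choose_eq_zero_of_lt two_pos, zero_add, one_mul]
    exact congrArg₂ (fSkew 0) (Subsingleton.elim _ _) (Subsingleton.elim _ _)
  simp only [Nat.add_sub_cancel]
  rw [fSkew_eq_natCard (sum_staircaseMinusColumn_rows m),
    fSkew_eq_natCard (by simpa using sum_staircase_rows m),
    Nat.card_congr (standardFillingEquivOfIsolated (s := cornerCell m) cornerCell_isolated),
    Nat.card_prod, Nat.card_fin,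
    Nat.card_congr (standardFillingEquivOfRelIso staircaseShiftRelIso _)]
  rfl

/-- with `ρ_n = (n, n−1, …, 2, 1)` and `(1^{n−1})` the single-column
partition with `n−1` boxes: `f^{ρ_n/(1^{n−1})} = (C(n,2)+1) · f^{(n−1, n−2, …, 1)}`. -/
theorem stmt_15 (n : ℕ) (hn : 2 ≤ n) :
    fSkew n (fun i => n - (i : ℕ)) (fun i => if (i : ℕ) < n - 1 then 1 else 0) =
      (n.choose 2 + 1) * fSkew (n - 1) (fun i => n - 1 - (i : ℕ)) (fun _ => 0) :=
  stmt_15_general n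

end
end
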